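/- Let β_A, β_H > 0 and α_A, α_H > 0 with (β_A, α_A) ≠ (β_H, α_H) and α_H·β_A − α_A·β_H ≠ 0 (class P_SP without P_SP,1), let ω₀ ≥ 1 and n ≥ 1. Write R(y) := f_A(y)/f_H(y), G(y) := β_A·log R(y) + β_H·(1 − R(y)), L(k) := f_A(k)·log(f_A(k)/f_H(k)) and D_k := L(k+1) − L(k). Then: (i) for every y ∈ [0,∞), I_n ≥ E^{L,tan}_{y,n}, where for β_A ≠ 1, E^{L,tan}_{y,n} := G(y)·((1 − β_A^n)/(1 − β_A))·(ω₀ − α_A/(1 − β_A)) + [ (α_A/(β_A·(1 − β_A)))·G(y) + (α_H − α_A·β_H/β_A)·(1 − R(y)) ]·n, and for β_A = 1, E^{L,tan}_{y,n} := ( log R(y) + β_H·(1 − R(y)) )·( (α_A/2)·n² + (ω₀ + α_A/2)·n ) + (α_H − α_A·β_H)·(1 − R(y))·n; (ii) for every k ∈ ℕ₀, I_n ≥ E^{L,sec}_{k,n}, where for β_A ≠ 1, E^{L,sec}_{k,n} := (D_k + β_H − β_A)·((1 − β_A^n)/(1 − β_A))·(ω₀ − α_A/(1 − β_A)) + [ (α_A/(β_A·(1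 − β_A)))·(D_k + β_H − β_A) − D_k·(k + α_A/β_A) + L(k) − α_A·β_H/β_A + α_H ]·n, and for β_A = 1, E^{L,sec}_{k,n} := (D_k + β_H − 1)·( (α_A/2)·n² + (ω₀ + α_A/2)·n ) − [ D_k·(k + α_A) − L(k) + α_A·β_H − α_H ]·n. -/

import Mathlib

/-!
Write `κ(x)` for the relative entropy of `Poisson(f_A x)` with respect to `Poisson(f_H x)`
(`poissonKL`). Conditioning on the first generation gives the recursion
`I_{n+1}(x) = κ(x) + ∑_y p_A(x, y) I_n(y)`; the exchange of summations is justified because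
`∑ |p_A log (p_A / p_H)|` over `n`-step paths grows at most linearly in the initial size.
Since `f_A` is affine, `E_A[ω_k] = f_A^[k](ω₀)`, so every affine minorant `a m + b ≤ κ(m)` on `ℕ`
gives `I_n ≥ ∑_{k<n} (a f_A^[k](ω₀) + b)`, a geometric (or, for `β_A = 1`, arithmetic) sum.
The tangent family is the minorant `u log s + v (1 - s) ≤ κ` (maximal at `s = u / v`); the secant
family comes from convexity of `t ↦ f_A(t) log (f_A(t) / f_H(t))`, an affine restriction of the
jointly convex `(u, v) ↦ u log (u / v)` (log-sum inequality).
-/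

open Real Filter

/-- One transition weight of the Poisson Galton–Watson process with immigration:
probability that the next generation size is `y` given the previous size is `x`. -/
noncomputable def gwStep (β α : ℝ) (x y : ℕ) : ℝ :=
  Real.exp (-(β * (x : ℝ) + α)) * (β * (x : ℝ) + α) ^ y / (Nat.factorial y : ℝ)

/-- The `n`-step path law (pmf on `Fin n → ℕ`) with initial generation size `ω₀`. -/
noncomputable def gwPath (β α : ℝ) (ω₀ n : ℕ) (ω : Fin n → ℕ) : ℝ :=
  ∏ k : Fin n,
    gwStep β α
      (if (k : ℕ) = 0 then ω₀ else ω ⟨(k : ℕ) - 1, Nat.lt_of_le_of_lt (Nat.sub_le _ _) k.2⟩)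
      (ω k)

/-- Relative entropy between the `n`-step path laws (summands with vanishing
`p_A` contribute `0`, since they are multiplied by `p_A`). -/
noncomputable def relEnt (βA αA βH αH : ℝ) (ω₀ n : ℕ) : ℝ :=
  ∑' ω : Fin n → ℕ,
    gwPath βA αA ω₀ n ω * Real.log (gwPath βA αA ω₀ n ω / gwPath βH αH ω₀ n ω)

open Finset

noncomputable def poissonWeight (l : ℝ) (y : ℕ) : ℝ :=
  exp (-l) * l ^ y / (y.factorial : ℝ)

noncomputable def poissonKL (u v : ℝ) : ℝ :=
  u * log (u / v) + v - u

section Poisson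

variable {l : ℝ}

lemma poissonWeight_pos (hl : 0 < l) (y : ℕ) : 0 < poissonWeight l y := by
  unfold poissonWeight
  positivity

lemma poissonWeight_succ_mul (l : ℝ) (y : ℕ) :
    poissonWeight l (y + 1) * (y + 1 : ℕ) = l * poissonWeight l y := by
  simp only [poissonWeight, Nat.factorial_succ, pow_succ]
  push_cast
  field_simp

lemma hasSum_poissonWeight (l : ℝ) : HasSum (poissonWeight l) 1 := by
  have h := (NormedSpace.expSeries_div_hasSum_exp l).mul_left (exp (-l))
  rw [← Real.exp_eq_exp_ℝ, ← Real.exp_add, neg_add_cancel, Real.exp_zero] at h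
  exact h.congr_fun fun y => mul_div_assoc _ _ _

lemma hasSum_poissonWeight_mul_cast (l : ℝ) :
    HasSum (fun y => poissonWeight l y * y) l := by
  have h := ((hasSum_poissonWeight l).mul_left l).congr_fun (poissonWeight_succ_mul l)
  rw [hasSum_nat_add_iff (f := fun y => poissonWeight l y * y) 1] at h
  simpa using h

lemma hasSum_poissonWeight_mul_affine (l a b : ℝ) :
    HasSum (fun y => poissonWeight l y * (a * y + b)) (a * l + b) := by
  have h := ((hasSum_poissonWeight_mul_cast l).mul_left a).add
    ((hasSum_poissonWeight l).mul_left b)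
  rw [mul_one] at h
  exact h.congr_fun fun y => by ring

lemma log_poissonWeight (hl : 0 < l) (y : ℕ) :
    log (poissonWeight l y) = -l + y * log l - log y.factorial := by
  unfold poissonWeight
  rw [log_div (by positivity) (by positivity), log_mul (by positivity)
    (by positivity), log_exp, log_pow]

variable {u v : ℝ}

lemma log_poissonWeight_div (hu : 0 < u) (hv : 0 < v) (y : ℕ) :
    log (poissonWeight u y / poissonWeight v y) = v - u + y * log (u / v) := by
  rw [log_div (poissonWeight_pos hu y).ne' (poissonWeight_pos hv y).ne', log_poissonWeight hu,
    log_poissonWeight hv, log_div hu.ne' hv.ne']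
  ring

lemma hasSum_poissonWeight_mul_log_div (hu : 0 < u) (hv : 0 < v) :
    HasSum (fun y => poissonWeight u y * log (poissonWeight u y / poissonWeight v y))
      (poissonKL u v) := by
  have h := hasSum_poissonWeight_mul_affine u (log (u / v)) (v - u)
  simp only [log_poissonWeight_div hu hv, poissonKL]
  convert h using 2 <;> ring

lemma mul_log_add_mul_one_sub_le_poissonKL (hu : 0 < u) (hv : 0 < v) {s : ℝ} (hs : 0 < s) :
    u * log s + v * (1 - s) ≤ poissonKL u v := by
  have h := mul_le_mul_of_nonneg_left (log_le_sub_one_of_pos (by positivity : 0 < s * v / u)) hu.le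
  rw [log_div (by positivity) hu.ne', log_mul hs.ne' hv.ne'] at h
  rw [poissonKL, log_div hu.ne' hv.ne']
  field_simp at h
  nlinarith [h]

end Poisson

lemma abs_log_le_add_inv {r : ℝ} (hr : 0 < r) : |log r| ≤ r + r⁻¹ := by
  have h₁ := log_le_sub_one_of_pos hr
  have h₂ := log_le_sub_one_of_pos (inv_pos.2 hr)
  rw [log_inv] at h₂
  have : 0 < r⁻¹ := inv_pos.2 hr
  rw [abs_le]
  constructor <;> linarith

lemma mul_add_div_mul_add_le {a b c d t : ℝ} (ha : 0 ≤ a) (hb : 0 ≤ b) (hc : 0 < c) (hd : 0 < d)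
    (ht : 0 ≤ t) : (a * t + b) / (c * t + d) ≤ a / c + b / d := by
  rw [div_le_iff₀ (by positivity)]
  have h : (a / c + b / d) * (c * t + d) = a * t + b + (a / c * d + b / d * c * t) := by
    field_simp
    ring
  rw [h]
  have : 0 ≤ a / c * d + b / d * c * t := by positivity
  linarith

section FinCons

variable {α : Type*} {n : ℕ}

lemma hasSum_tsum_fin_cons {f : (Fin (n + 1) → α) → ℝ} (hf : Summable f) :
    HasSum (fun y => ∑' ω, f (Fin.cons y ω)) (∑' ω, f ω) := by
  have hf' : Summable (f ∘ Fin.consEquiv fun _ => α) :=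
    (Fin.consEquiv fun _ => α).summable_iff.2 hf
  exact ((Fin.consEquiv fun _ => α).hasSum_iff.2 hf.hasSum).prod_fiberwise
    fun y => (hf'.prod_factor y).hasSum

lemma summable_of_fin_cons_of_nonneg {f : (Fin (n + 1) → α) → ℝ} (hf : 0 ≤ f)
    (hfib : ∀ y, Summable fun ω => f (Fin.cons y ω))
    (hout : Summable fun y => ∑' ω, f (Fin.cons y ω)) : Summable f :=
  (Fin.consEquiv fun _ => α).summable_iff.1
    ((summable_prod_of_nonneg fun _ => hf _).2 ⟨hfib, hout⟩)

end FinCons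

section GaltonWatson

variable {β α : ℝ}

lemma gwStep_eq_poissonWeight (β α : ℝ) (x : ℕ) : gwStep β α x = poissonWeight (β * x + α) :=
  rfl

lemma gwPath_zero (β α : ℝ) (x : ℕ) (ω : Fin 0 → ℕ) : gwPath β α x 0 ω = 1 := by
  simp [gwPath]

lemma gwPath_cons (β α : ℝ) (x y n : ℕ) (ω : Fin n → ℕ) :
    gwPath β α x (n + 1) (Fin.cons y ω) = gwStep β α x y * gwPath β α y n ω := by
  rw [gwPath, Fin.prod_univ_succ]
  congr 1
  refine prod_congr rfl fun ⟨i, hi⟩ _ => ?_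
  cases i <;> rfl

lemma gwStep_pos (hβ : 0 ≤ β) (hα : 0 < α) (x y : ℕ) : 0 < gwStep β α x y :=
  poissonWeight_pos (by positivity) y

lemma gwPath_pos (hβ : 0 ≤ β) (hα : 0 < α) (x n : ℕ) (ω : Fin n → ℕ) : 0 < gwPath β α x n ω :=
  prod_pos fun _ _ => gwStep_pos hβ hα _ _

lemma hasSum_gwPath (hβ : 0 ≤ β) (hα : 0 < α) (x n : ℕ) : HasSum (gwPath β α x n) 1 := by
  induction n generalizing x with
  | zero =>
    simpa [gwPath_zero] using hasSum_fintype (gwPath β α x 0)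
  | succ n ih =>
    have hfib (y : ℕ) : HasSum (fun ω => gwPath β α x (n + 1) (Fin.cons y ω)) (gwStep β α x y) := by
      simpa only [gwPath_cons, mul_one] using (ih y).mul_left (gwStep β α x y)
    have hs : Summable (gwPath β α x (n + 1)) :=
      summable_of_fin_cons_of_nonneg (fun ω => (gwPath_pos hβ hα x _ ω).le)
        (fun y => (hfib y).summable)
        ((hasSum_poissonWeight _).summable.congr fun y => (hfib y).tsum_eq.symm)
    have h := hasSum_tsum_fin_cons hs
    simp only [fun y => (hfib y).tsum_eq] at h
    rw [(hasSum_poissonWeight _).unique h]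
    exact hs.hasSum

end GaltonWatson

section AffineIterate

variable {β : ℝ} (α : ℝ)

lemma iterate_mul_add_apply (β y : ℝ) (k : ℕ) :
    (fun t => β * t + α)^[k] y = β ^ k * y + (fun t => β * t + α)^[k] 0 := by
  induction k with
  | zero => simp
  | succ k ih =>
    simp only [Function.iterate_succ_apply', ih]
    ring

lemma sum_range_iterate_mul_add_apply (β y : ℝ) (n : ℕ) :
    ∑ k ∈ range n, (fun t => β * t + α)^[k] y =
      (∑ k ∈ range n, β ^ k) * y + ∑ k ∈ range n, (fun t => β * t + α)^[k] 0 := by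
  simp only [iterate_mul_add_apply α β y, sum_add_distrib, sum_mul]

lemma iterate_mul_add_apply_of_ne_one (hβ : β ≠ 1) (x : ℝ) (k : ℕ) :
    (fun t => β * t + α)^[k] x = β ^ k * (x - α / (1 - β)) + α / (1 - β) := by
  have h : 1 - β ≠ 0 := sub_ne_zero.2 hβ.symm
  induction k with
  | zero => simp
  | succ k ih =>
    rw [Function.iterate_succ_apply', ih]
    field_simp
    ring

lemma sum_range_iterate_mul_add_of_ne_one (hβ : β ≠ 1) (x : ℝ) (n : ℕ) :
    ∑ k ∈ range n, (fun t => β * t + α)^[k] x =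
      (1 - β ^ n) / (1 - β) * (x - α / (1 - β)) + n * (α / (1 - β)) := by
  have h : 1 - β ≠ 0 := sub_ne_zero.2 hβ.symm
  induction n with
  | zero => simp
  | succ n ih =>
    rw [sum_range_succ, ih, iterate_mul_add_apply_of_ne_one α hβ]
    push_cast
    field_simp
    ring

lemma iterate_mul_add_apply_of_eq_one (hβ : β = 1) (x : ℝ) (k : ℕ) :
    (fun t => β * t + α)^[k] x = x + k * α := by
  subst hβ
  induction k with
  | zero => simp
  | succ k ih =>
    rw [Function.iterate_succ_apply', ih]
    push_cast
    ring

lemma sum_range_iterate_mul_add_of_eq_one (hβ : β = 1) (x : ℝ) (n : ℕ) :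
    ∑ k ∈ range n, (fun t => β * t + α)^[k] x = n * x + α * n * (n - 1) / 2 := by
  induction n with
  | zero => simp
  | succ n ih =>
    rw [sum_range_succ, ih, iterate_mul_add_apply_of_eq_one α hβ]
    push_cast
    ring

end AffineIterate

section RelativeEntropy

variable {βA αA βH αH : ℝ}

noncomputable def relEntSummand (βA αA βH αH : ℝ) (ω₀ n : ℕ) (ω : Fin n → ℕ) : ℝ :=
  gwPath βA αA ω₀ n ω * log (gwPath βA αA ω₀ n ω / gwPath βH αH ω₀ n ω)

lemma relEnt_eq_tsum (βA αA βH αH : ℝ) (ω₀ n : ℕ) :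
    relEnt βA αA βH αH ω₀ n = ∑' ω, relEntSummand βA αA βH αH ω₀ n ω :=
  rfl

lemma relEntSummand_zero (x : ℕ) (ω : Fin 0 → ℕ) : relEntSummand βA αA βH αH x 0 ω = 0 := by
  simp [relEntSummand, gwPath_zero]

lemma relEnt_zero (x : ℕ) : relEnt βA αA βH αH x 0 = 0 := by
  simp [relEnt_eq_tsum, relEntSummand_zero]

lemma relEntSummand_cons (hβA : 0 < βA) (hαA : 0 < αA) (hβH : 0 < βH) (hαH : 0 < αH)
    (x y n : ℕ) (ω : Fin n → ℕ) :
    relEntSummand βA αA βH αH x (n + 1) (Fin.cons y ω) = gwStep βA αA x y *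
      (gwPath βA αA y n ω * log (gwStep βA αA x y / gwStep βH αH x y)
        + relEntSummand βA αA βH αH y n ω) := by
  have hA := gwStep_pos hβA.le hαA x y
  have hH := gwStep_pos hβH.le hαH x y
  have hpA := gwPath_pos hβA.le hαA y n ω
  have hpH := gwPath_pos hβH.le hαH y n ω
  rw [relEntSummand, relEntSummand, gwPath_cons, gwPath_cons, mul_div_mul_comm,
    log_mul (div_pos hA hH).ne' (div_pos hpA hpH).ne']
  ring

lemma exists_abs_log_gwStep_div_le (hβA : 0 < βA) (hαA : 0 < αA) (hβH : 0 < βH)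
    (hαH : 0 < αH) :
    ∃ K, ∀ x y : ℕ, |log (gwStep βA αA x y / gwStep βH αH x y)| ≤ K * (x + y + 1) := by
  set M := βA / βH + αA / αH + (βH / βA + αH / αA)
  refine ⟨βA + βH + αA + αH + M, fun x y => ?_⟩
  have hx : (0 : ℝ) ≤ x := x.cast_nonneg
  have hy : (0 : ℝ) ≤ y := y.cast_nonneg
  have hA : 0 < βA * x + αA := by positivity
  have hH : 0 < βH * x + αH := by positivity
  have hlog : |log ((βA * x + αA) / (βH * x + αH))| ≤ M := by
    refine (abs_log_le_add_inv (div_pos hA hH)).trans (add_le_add ?_ ?_)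
    · exact mul_add_div_mul_add_le hβA.le hαA.le hβH hαH hx
    · rw [inv_div]
      exact mul_add_div_mul_add_le hβH.le hαH.le hβA hαA hx
  have hM : 0 ≤ M := by positivity
  rw [gwStep_eq_poissonWeight, gwStep_eq_poissonWeight, log_poissonWeight_div hA hH]
  calc |βH * x + αH - (βA * x + αA) + y * log ((βA * x + αA) / (βH * x + αH))|
      ≤ |βH * x + αH - (βA * x + αA)| + y * M := by
        refine (abs_add_le _ _).trans (add_le_add_right ?_ _)
        rw [abs_mul, Nat.abs_cast]
        exact mul_le_mul_of_nonneg_left hlog hy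
    _ ≤ (βA + βH + αA + αH) * (x + 1) + y * M := by
        gcongr
        rw [abs_le]
        constructor <;> nlinarith
    _ ≤ (βA + βH + αA + αH + M) * (x + y + 1) := by nlinarith

lemma abs_relEntSummand_cons_le (hβA : 0 < βA) (hαA : 0 < αA) (hβH : 0 < βH) (hαH : 0 < αH)
    (x y n : ℕ) (ω : Fin n → ℕ) :
    |relEntSummand βA αA βH αH x (n + 1) (Fin.cons y ω)| ≤ gwStep βA αA x y *
      (gwPath βA αA y n ω * |log (gwStep βA αA x y / gwStep βH αH x y)|
        + |relEntSummand βA αA βH αH y n ω|) := by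
  rw [relEntSummand_cons hβA hαA hβH hαH, abs_mul, abs_of_pos (gwStep_pos hβA.le hαA x y)]
  refine mul_le_mul_of_nonneg_left ((abs_add_le _ _).trans_eq ?_)
    (gwStep_pos hβA.le hαA x y).le
  rw [abs_mul, abs_of_pos (gwPath_pos hβA.le hαA y n ω)]

lemma exists_summable_abs_relEntSummand_le (hβA : 0 < βA) (hαA : 0 < αA) (hβH : 0 < βH)
    (hαH : 0 < αH) (n : ℕ) :
    ∃ C, ∀ x : ℕ, Summable (fun ω => |relEntSummand βA αA βH αH x n ω|) ∧
      ∑' ω, |relEntSummand βA αA βH αH x n ω| ≤ C * (x + 1) := by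
  induction n with
  | zero => exact ⟨0, fun x => by simp [relEntSummand_zero]⟩
  | succ n ih =>
    obtain ⟨C, hC⟩ := ih
    obtain ⟨K, hK⟩ := exists_abs_log_gwStep_div_le hβA hαA hβH hαH
    have hC0 : 0 ≤ C := by simpa using (tsum_nonneg fun _ => abs_nonneg _).trans (hC 0).2
    have hK0 : 0 ≤ K := by simpa using (abs_nonneg _).trans (hK 0 0)
    refine ⟨(K + C) * (1 + βA + αA), fun x => ?_⟩
    have hx : (0 : ℝ) ≤ x := x.cast_nonneg
    have hmaj (y : ℕ) : HasSum (fun ω => gwStep βA αA x y *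
        (gwPath βA αA y n ω * |log (gwStep βA αA x y / gwStep βH αH x y)|
          + |relEntSummand βA αA βH αH y n ω|))
        (gwStep βA αA x y * (|log (gwStep βA αA x y / gwStep βH αH x y)|
          + ∑' ω, |relEntSummand βA αA βH αH y n ω|)) := by
      simpa only [one_mul] using
        (((hasSum_gwPath hβA.le hαA y n).mul_right _).add (hC y).1.hasSum).mul_left _
    have hfib (y : ℕ) : Summable fun ω => |relEntSummand βA αA βH αH x (n + 1) (Fin.cons y ω)| :=
      (hmaj y).summable.of_nonneg_of_le (fun _ => abs_nonneg _)
        (abs_relEntSummand_cons_le hβA hαA hβH hαH x y n)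
    have hfib_le (y : ℕ) : ∑' ω, |relEntSummand βA αA βH αH x (n + 1) (Fin.cons y ω)| ≤
        gwStep βA αA x y * ((K + C) * y + (K * (x + 1) + C)) := by
      refine (hasSum_le (abs_relEntSummand_cons_le hβA hαA hβH hαH x y n) (hfib y).hasSum
        (hmaj y)).trans (mul_le_mul_of_nonneg_left ?_ (gwStep_pos hβA.le hαA x y).le)
      nlinarith [hK x y, (hC y).2]
    have hout := hasSum_poissonWeight_mul_affine (βA * x + αA) (K + C) (K * (x + 1) + C)
    have hs := summable_of_fin_cons_of_nonneg (fun _ => abs_nonneg _) hfib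
      (hout.summable.of_nonneg_of_le (fun _ => tsum_nonneg fun _ => abs_nonneg _) hfib_le)
    refine ⟨hs, (hasSum_le hfib_le (hasSum_tsum_fin_cons hs) hout).trans ?_⟩
    nlinarith [mul_nonneg hC0 hx, mul_nonneg (add_nonneg hK0 hC0) hβA.le,
      mul_nonneg (add_nonneg hK0 hC0) (mul_nonneg hαA.le hx)]

lemma hasSum_gwStep_mul_relEnt (hβA : 0 < βA) (hαA : 0 < αA) (hβH : 0 < βH) (hαH : 0 < αH)
    (x n : ℕ) :
    HasSum (fun y => gwStep βA αA x y * relEnt βA αA βH αH y n)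
      (relEnt βA αA βH αH x (n + 1) - poissonKL (βA * x + αA) (βH * x + αH)) := by
  obtain ⟨C, hC⟩ := exists_summable_abs_relEntSummand_le hβA hαA hβH hαH n
  obtain ⟨C', hC'⟩ := exists_summable_abs_relEntSummand_le hβA hαA hβH hαH (n + 1)
  have hfib (y : ℕ) : ∑' ω, relEntSummand βA αA βH αH x (n + 1) (Fin.cons y ω) =
      gwStep βA αA x y * log (gwStep βA αA x y / gwStep βH αH x y)
        + gwStep βA αA x y * relEnt βA αA βH αH y n := by
    simp only [relEntSummand_cons hβA hαA hβH hαH]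
    rw [tsum_mul_left, ((hasSum_gwPath hβA.le hαA y n).mul_right _).add (hC y).1.of_abs.hasSum
      |>.tsum_eq, one_mul, mul_add, relEnt_eq_tsum]
  have h := hasSum_tsum_fin_cons (hC' x).1.of_abs
  simp only [hfib] at h
  have hKL := hasSum_poissonWeight_mul_log_div (u := βA * x + αA) (v := βH * x + αH)
    (by positivity) (by positivity)
  exact (h.sub hKL).congr_fun fun y => (add_sub_cancel_left _ _).symm

lemma hasSum_gwStep_mul_sum_iterate (β α a b : ℝ) (x n : ℕ) :
    HasSum (fun y => gwStep β α x y * (a * ∑ k ∈ range n, (fun t => β * t + α)^[k] (y : ℝ) + b))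
      (a * ∑ k ∈ range n, (fun t => β * t + α)^[k + 1] (x : ℝ) + b) := by
  simp only [Function.iterate_succ_apply]
  rw [sum_range_iterate_mul_add_apply α β (β * x + α)]
  convert (hasSum_poissonWeight_mul_affine (β * x + α) (a * ∑ k ∈ range n, β ^ k)
    (a * ∑ k ∈ range n, (fun t => β * t + α)^[k] 0 + b)).congr_fun fun y => ?_ using 1
  · ring
  · rw [sum_range_iterate_mul_add_apply α β y, gwStep_eq_poissonWeight]
    ring

lemma le_relEnt_of_affine_le_poissonKL (hβA : 0 < βA) (hαA : 0 < αA) (hβH : 0 < βH)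
    (hαH : 0 < αH) {a b : ℝ}
    (hab : ∀ m : ℕ, a * m + b ≤ poissonKL (βA * m + αA) (βH * m + αH)) (x n : ℕ) :
    a * ∑ k ∈ range n, (fun t => βA * t + αA)^[k] (x : ℝ) + b * n ≤
      relEnt βA αA βH αH x n := by
  induction n generalizing x with
  | zero => simp [relEnt_zero]
  | succ n ih =>
    have hle := hasSum_le
      (fun y => mul_le_mul_of_nonneg_left (ih y) (gwStep_pos hβA.le hαA x y).le)
      (hasSum_gwStep_mul_sum_iterate βA αA a (b * n) x n)
      (hasSum_gwStep_mul_relEnt hβA hαA hβH hαH x n)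
    rw [sum_range_succ', Function.iterate_zero_apply]
    push_cast
    linarith [hab x]

end RelativeEntropy

lemma add_mul_log_div_add_le {x₁ x₂ y₁ y₂ : ℝ} (hx₁ : 0 ≤ x₁) (hx₂ : 0 ≤ x₂) (hy₁ : 0 < y₁)
    (hy₂ : 0 < y₂) :
    (x₁ + x₂) * log ((x₁ + x₂) / (y₁ + y₂)) ≤ x₁ * log (x₁ / y₁) + x₂ * log (x₂ / y₂) := by
  have hy : 0 < y₁ + y₂ := by positivity
  have h := convexOn_mul_log.2 (Set.mem_Ici.2 (by positivity : 0 ≤ x₁ / y₁))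
    (Set.mem_Ici.2 (by positivity : 0 ≤ x₂ / y₂)) (by positivity : 0 ≤ y₁ / (y₁ + y₂))
    (by positivity : 0 ≤ y₂ / (y₁ + y₂)) (by field_simp)
  have e : y₁ / (y₁ + y₂) * (x₁ / y₁) + y₂ / (y₁ + y₂) * (x₂ / y₂) = (x₁ + x₂) / (y₁ + y₂) := by
    field_simp
  simp only [smul_eq_mul, e] at h
  generalize log ((x₁ + x₂) / (y₁ + y₂)) = L at h ⊢
  generalize log (x₁ / y₁) = L₁ at h ⊢
  generalize log (x₂ / y₂) = L₂ at h ⊢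
  calc (x₁ + x₂) * L = (y₁ + y₂) * ((x₁ + x₂) / (y₁ + y₂) * L) := by field_simp
    _ ≤ (y₁ + y₂) * (y₁ / (y₁ + y₂) * (x₁ / y₁ * L₁) + y₂ / (y₁ + y₂) * (x₂ / y₂ * L₂)) :=
        mul_le_mul_of_nonneg_left h hy.le
    _ = x₁ * L₁ + x₂ * L₂ := by field_simp

lemma convexOn_mul_log_div {a b c d : ℝ} (ha : 0 ≤ a) (hb : 0 < b) (hc : 0 ≤ c) (hd : 0 < d) :
    ConvexOn ℝ (Set.Ici 0) fun t => (a * t + b) * log ((a * t + b) / (c * t + d)) := by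
  refine convexOn_iff_forall_pos.2 ⟨convex_Ici 0, fun s hs t ht μ ν hμ hν hμν => ?_⟩
  rw [Set.mem_Ici] at hs ht
  have h := add_mul_log_div_add_le (x₁ := μ * (a * s + b)) (x₂ := ν * (a * t + b))
    (y₁ := μ * (c * s + d)) (y₂ := ν * (c * t + d)) (by positivity) (by positivity)
    (by positivity) (by positivity)
  rw [mul_div_mul_left _ _ hμ.ne', mul_div_mul_left _ _ hν.ne'] at h
  have e (p q : ℝ) : p * (μ * s + ν * t) + q = μ * (p * s + q) + ν * (p * t + q) := by
    linear_combination -q * hμν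
  simp only [smul_eq_mul, e]
  linarith

lemma ConvexOn.add_slope_mul_sub_le {s : Set ℝ} {f : ℝ → ℝ} (hf : ConvexOn ℝ s f) {x y z : ℝ}
    (hx : x ∈ s) (hy : y ∈ s) (hz : z ∈ s) (hxy : x < y) (hxyz : z ≤ x ∨ y ≤ z) :
    f x + slope f x y * (z - x) ≤ f z := by
  rcases hxyz with hzx | hyz
  · rcases hzx.eq_or_lt with rfl | hzx
    · simp
    have h := hf.slope_mono hx ⟨hz, hzx.ne⟩ ⟨hy, hxy.ne'⟩ (hzx.trans hxy).le
    rw [slope_def_field f x z, div_le_iff_of_neg (sub_neg.2 hzx)] at h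
    linarith
  · have hxz := hxy.trans_le hyz
    have h := hf.slope_mono hx ⟨hy, hxy.ne'⟩ ⟨hz, hxz.ne'⟩ hyz
    rw [slope_def_field f x z, le_div_iff₀ (sub_pos.2 hxz)] at h
    linarith

theorem relEnt_lower_bounds_general (βA βH αA αH : ℝ)
    (hβA : 0 < βA) (hβH : 0 < βH) (hαA : 0 < αA) (hαH : 0 < αH)
    (ω₀ : ℕ) (n : ℕ)
    (R : ℝ → ℝ) (hR : ∀ y : ℝ, R y = (βA * y + αA) / (βH * y + αH))
    (G : ℝ → ℝ) (hG : ∀ y : ℝ, G y = βA * Real.log (R y) + βH * (1 - R y))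
    (L : ℕ → ℝ)
    (hL : ∀ k : ℕ, L k = (βA * (k : ℝ) + αA)
      * Real.log ((βA * (k : ℝ) + αA) / (βH * (k : ℝ) + αH)))
    (D : ℕ → ℝ) (hD : ∀ k : ℕ, D k = L (k + 1) - L k) :
    (∀ y : ℝ, 0 ≤ y →
      (βA ≠ 1 → relEnt βA αA βH αH ω₀ n ≥
        G y * ((1 - βA ^ n) / (1 - βA)) * ((ω₀ : ℝ) - αA / (1 - βA))
          + ((αA / (βA * (1 - βA))) * G y + (αH - αA * βH / βA) * (1 - R y)) * (n : ℝ)) ∧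
      (βA = 1 → relEnt βA αA βH αH ω₀ n ≥
        (Real.log (R y) + βH * (1 - R y))
            * ((αA / 2) * (n : ℝ) ^ 2 + ((ω₀ : ℝ) + αA / 2) * (n : ℝ))
          + (αH - αA * βH) * (1 - R y) * (n : ℝ))) ∧
    (∀ k : ℕ,
      (βA ≠ 1 → relEnt βA αA βH αH ω₀ n ≥
        (D k + βH - βA) * ((1 - βA ^ n) / (1 - βA)) * ((ω₀ : ℝ) - αA / (1 - βA))
          + ((αA / (βA * (1 - βA))) * (D k + βH - βA) - D k * ((k : ℝ) + αA / βA)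
              + L k - αA * βH / βA + αH) * (n : ℝ)) ∧
      (βA = 1 → relEnt βA αA βH αH ω₀ n ≥
        (D k + βH - 1) * ((αA / 2) * (n : ℝ) ^ 2 + ((ω₀ : ℝ) + αA / 2) * (n : ℝ))
          - (D k * ((k : ℝ) + αA) - L k + αA * βH - αH) * (n : ℝ))) := by
  have bound (a b : ℝ) (hab : ∀ m : ℕ, a * m + b ≤ poissonKL (βA * m + αA) (βH * m + αH)) :
      (βA ≠ 1 → a * ((1 - βA ^ n) / (1 - βA) * (ω₀ - αA / (1 - βA)) + n * (αA / (1 - βA)))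
        + b * n ≤ relEnt βA αA βH αH ω₀ n) ∧
      (βA = 1 → a * (n * ω₀ + αA * n * (n - 1) / 2) + b * n ≤ relEnt βA αA βH αH ω₀ n) := by
    have h := le_relEnt_of_affine_le_poissonKL hβA hαA hβH hαH hab ω₀ n
    exact ⟨fun hβ => by rwa [sum_range_iterate_mul_add_of_ne_one αA hβ] at h,
      fun hβ => by rwa [sum_range_iterate_mul_add_of_eq_one αA hβ] at h⟩
  refine ⟨fun y hy => ?_, fun k => ?_⟩
  · have hRy : 0 < R y := by rw [hR]; positivity
    obtain ⟨hne, heq⟩ := bound (G y) (αA * log (R y) + αH * (1 - R y)) fun m => by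
      have := mul_log_add_mul_one_sub_le_poissonKL (u := βA * m + αA) (v := βH * m + αH)
        (by positivity) (by positivity) hRy
      rw [hG]
      linarith
    refine ⟨fun hβ => (hne hβ).trans_eq' ?_, fun hβ => (heq hβ).trans_eq' ?_⟩
    · rw [hG]
      field_simp [sub_ne_zero.2 (Ne.symm hβ)]
      ring
    · subst hβ
      rw [hG]
      ring
  · set ℓ : ℝ → ℝ := fun t => (βA * t + αA) * log ((βA * t + αA) / (βH * t + αH))
    have hLk : L k = ℓ k := hL k
    have hDk : D k = ℓ (k + 1) - ℓ k := by rw [hD, hLk, hL]; push_cast; rfl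
    obtain ⟨hne, heq⟩ := bound (D k + βH - βA) (L k - D k * k + αH - αA) fun m => by
      have hsec := (convexOn_mul_log_div hβA.le hαA hβH.le hαH).add_slope_mul_sub_le
        (Set.mem_Ici.2 k.cast_nonneg) (Set.mem_Ici.2 (by positivity : (0 : ℝ) ≤ k + 1))
        (Set.mem_Ici.2 m.cast_nonneg) (lt_add_one _)
        ((le_or_gt m k).imp (fun h => by exact_mod_cast h) fun h => by exact_mod_cast h)
      rw [slope_def_field, add_sub_cancel_left, div_one] at hsec
      rw [hLk, hDk, poissonKL]
      linarith
    refine ⟨fun hβ => (hne hβ).trans_eq' ?_, fun hβ => (heq hβ).trans_eq' ?_⟩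
    · field_simp [sub_ne_zero.2 (Ne.symm hβ)]
      ring
    · subst hβ
      ring

/-- Closed-form lower bounds (tangent-line and secant-line families) for
the relative entropy on `P_SP` without `P_SP,1` (strictly positive parameters with
`(β_A,α_A) ≠ (β_H,α_H)` and `α_H·β_A − α_A·β_H ≠ 0`). Here `R(y) = f_A(y)/f_H(y)`,
`G(y) = β_A·log R(y) + β_H·(1 − R(y))`, `L(k) = f_A(k)·log(f_A(k)/f_H(k))`,
`D_k = L(k+1) − L(k)`. -/
theorem relEnt_lower_bounds (βA βH αA αH : ℝ)
    (hβA : 0 < βA) (hβH : 0 < βH) (hαA : 0 < αA) (hαH : 0 < αH)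
    (hne : (βA, αA) ≠ (βH, αH)) (hγ : αH * βA - αA * βH ≠ 0)
    (ω₀ : ℕ) (hω₀ : 1 ≤ ω₀) (n : ℕ) (hn : 1 ≤ n)
    (R : ℝ → ℝ) (hR : ∀ y : ℝ, R y = (βA * y + αA) / (βH * y + αH))
    (G : ℝ → ℝ) (hG : ∀ y : ℝ, G y = βA * Real.log (R y) + βH * (1 - R y))
    (L : ℕ → ℝ)
    (hL : ∀ k : ℕ, L k = (βA * (k : ℝ) + αA)
      * Real.log ((βA * (k : ℝ) + αA) / (βH * (k : ℝ) + αH)))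
    (D : ℕ → ℝ) (hD : ∀ k : ℕ, D k = L (k + 1) - L k) :
    (∀ y : ℝ, 0 ≤ y →
      (βA ≠ 1 → relEnt βA αA βH αH ω₀ n ≥
        G y * ((1 - βA ^ n) / (1 - βA)) * ((ω₀ : ℝ) - αA / (1 - βA))
          + ((αA / (βA * (1 - βA))) * G y + (αH - αA * βH / βA) * (1 - R y)) * (n : ℝ)) ∧
      (βA = 1 → relEnt βA αA βH αH ω₀ n ≥
        (Real.log (R y) + βH * (1 - R y))
            * ((αA / 2) * (n : ℝ) ^ 2 + ((ω₀ : ℝ) + αA / 2) * (n : ℝ))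
          + (αH - αA * βH) * (1 - R y) * (n : ℝ))) ∧
    (∀ k : ℕ,
      (βA ≠ 1 → relEnt βA αA βH αH ω₀ n ≥
        (D k + βH - βA) * ((1 - βA ^ n) / (1 - βA)) * ((ω₀ : ℝ) - αA / (1 - βA))
          + ((αA / (βA * (1 - βA))) * (D k + βH - βA) - D k * ((k : ℝ) + αA / βA)
              + L k - αA * βH / βA + αH) * (n : ℝ)) ∧
      (βA = 1 → relEnt βA αA βH αH ω₀ n ≥
        (D k + βH - 1) * ((αA / 2) * (n : ℝ) ^ 2 + ((ω₀ : ℝ) + αA / 2) * (n : ℝ))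
          - (D k * ((k : ℝ) + αA) - L k + αA * βH - αH) * (n : ℝ))) :=
  relEnt_lower_bounds_general βA βH αA αH hβA hβH hαA hαH ω₀ n R hR G hG L hL D hD
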